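/- If trees t₁ and t₂ are related by a single application of a commutativity identity (permuting the children of a 𝓒-labelled node) and t₂ rewrites in one associativity-collapsing step to t₂', then there exists t₁' such that t₁ rewrites in one step to t₁' and t₁' is related to t₂' by a single commutativity application. -/

import Mathlib

inductive RTree (σ : Type) : Type
  | node : σ → List (RTree σ) → RTree σ

mutual
/-- One associativity-collapsing rewrite step on trees: at some position, a
subtree `a(f a(g) h)` with `a ∈ A` is replaced by `a(f g h)`. -/
inductive StepT {σ : Type} (A : Set σ) : RTree σ → RTree σ → Prop
  | root {a : σ} {f g h : List (RTree σ)} :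
      a ∈ A → StepT A (.node a (f ++ .node a g :: h)) (.node a (f ++ g ++ h))
  | congr {a : σ} {l l' : List (RTree σ)} :
      StepF A l l' → StepT A (.node a l) (.node a l')
/-- One associativity-collapsing rewrite step on forests. -/
inductive StepF {σ : Type} (A : Set σ) : List (RTree σ) → List (RTree σ) → Prop
  | head {t t' : RTree σ} {l : List (RTree σ)} :
      StepT A t t' → StepF A (t :: l) (t' :: l)
  | tail {t : RTree σ} {l l' : List (RTree σ)} :
      StepF A l l' → StepF A (t :: l) (t :: l')
end

mutual
/-- A single application of a commutativity identity: at exactly one position,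
a subtree `c(t₁ ⋯ tₙ)` with `c ∈ C` is replaced by `c(t_{σ(1)} ⋯ t_{σ(n)})`
for some permutation `σ`. -/
inductive CommT {σ : Type} (C : Set σ) : RTree σ → RTree σ → Prop
  | perm {c : σ} {l l' : List (RTree σ)} :
      c ∈ C → l.Perm l' → CommT C (.node c l) (.node c l')
  | congr {a : σ} {l l' : List (RTree σ)} :
      CommF C l l' → CommT C (.node a l) (.node a l')
/-- A single commutativity application inside a forest. -/
inductive CommF {σ : Type} (C : Set σ) : List (RTree σ) → List (RTree σ) → Prop
  | head {t t' : RTree σ} {l : List (RTree σ)} :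
      CommT C t t' → CommF C (t :: l) (t' :: l)
  | tail {t : RTree σ} {l l' : List (RTree σ)} :
      CommF C l l' → CommF C (t :: l) (t :: l')
end

/-! A commutativity step and a collapsing step interact only when the collapse happens at the
permuted node or just below it. A collapse `a(f a(g) h) ↦ a(f g h)` whose outer node was permuted
is matched by first collapsing, then permuting `f g h` (the children `g` travel together); a
collapse inside a child of a permuted node is performed at that child's position before the
permutation. If the permutation happens inside `f`, `h` or `a(g)`, collapse first and apply it
afterwards in the flattened list. All other configurations are disjoint or nested and commute. -/

theorem List.Perm.exists_replace_middle {α : Type*} {l f h : List α} {x : α}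
    (hp : l.Perm (f ++ x :: h)) :
    ∃ p q, l = p ++ x :: q ∧ ∀ g, (p ++ g ++ q).Perm (f ++ g ++ h) := by
  obtain ⟨p, q, rfl⟩ := List.append_of_mem (hp.symm.subset (List.mem_append_cons_self (a := x)))
  have hpq : (p ++ q).Perm (f ++ h) := List.perm_inv_core hp
  refine ⟨p, q, rfl, fun g => ?_⟩
  simpa only [List.append_assoc] using
    (List.perm_append_comm_assoc g p q).symm.trans
      ((hpq.append_left g).trans (List.perm_append_comm_assoc g f h))

section
variable {σ : Type} {A C : Set σ}

theorem StepF.exists_append_cons :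
    ∀ {l l' : List (RTree σ)}, StepF A l l' →
      ∃ p t t' q, StepT A t t' ∧ l = p ++ t :: q ∧ l' = p ++ t' :: q
  | _ :: _, _, .head h => ⟨[], _, _, _, h, rfl, rfl⟩
  | a :: _, _, .tail h =>
    let ⟨p, t, t', q, ht, hl, hl'⟩ := exists_append_cons h
    ⟨a :: p, t, t', q, ht, hl ▸ rfl, hl' ▸ rfl⟩

theorem StepF.append_cons {t t' : RTree σ} (h : StepT A t t') :
    ∀ p q : List (RTree σ), StepF A (p ++ t :: q) (p ++ t' :: q)
  | [], _ => .head h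
  | _ :: p, q => .tail (append_cons h p q)

theorem CommF.exists_append_cons :
    ∀ {l l' : List (RTree σ)}, CommF C l l' →
      ∃ p t t' q, CommT C t t' ∧ l = p ++ t :: q ∧ l' = p ++ t' :: q
  | _ :: _, _, .head h => ⟨[], _, _, _, h, rfl, rfl⟩
  | a :: _, _, .tail h =>
    let ⟨p, t, t', q, ht, hl, hl'⟩ := exists_append_cons h
    ⟨a :: p, t, t', q, ht, hl ▸ rfl, hl' ▸ rfl⟩

theorem CommF.append_cons {t t' : RTree σ} (h : CommT C t t') :
    ∀ p q : List (RTree σ), CommF C (p ++ t :: q) (p ++ t' :: q)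
  | [], _ => .head h
  | _ :: p, q => .tail (append_cons h p q)

theorem CommF.append (u v : List (RTree σ)) {l l' : List (RTree σ)} (h : CommF C l l') :
    CommF C (u ++ l ++ v) (u ++ l' ++ v) := by
  obtain ⟨p, t, t', q, ht, rfl, rfl⟩ := h.exists_append_cons
  simpa only [List.append_assoc, List.cons_append] using CommF.append_cons ht (u ++ p) (q ++ v)

theorem CommF.cases_of_eq_append_cons {l f h : List (RTree σ)} {x : RTree σ}
    (hc : CommF C l (f ++ x :: h)) :
    (∃ y, l = f ++ y :: h ∧ CommT C y x) ∨
    (∃ f', l = f' ++ x :: h ∧ CommF C f' f) ∨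
    (∃ h', l = f ++ x :: h' ∧ CommF C h' h) := by
  obtain ⟨p, s, s', q, hs, rfl, he⟩ := hc.exists_append_cons
  clear hc
  simp only [List.append_eq_append_iff, List.cons_eq_append_iff, List.cons.injEq] at he
  rcases he with ⟨c, rfl, ⟨rfl, rfl, rfl⟩ | ⟨d, rfl, rfl⟩⟩ | ⟨c, rfl, ⟨rfl, rfl, rfl⟩ | ⟨d, rfl, rfl⟩⟩
  · exact .inl ⟨s, by simp, hs⟩
  · exact .inr (.inr ⟨d ++ s :: q, by simp, CommF.append_cons hs d q⟩)
  · exact .inl ⟨s, by simp, hs⟩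
  · exact .inr (.inl ⟨p ++ s :: d, by simp, CommF.append_cons hs p d⟩)

theorem exists_step_comm_of_perm {c : σ} {l l' : List (RTree σ)} {z : RTree σ}
    (hcC : c ∈ C) (hp : l.Perm l') (hs : StepT A (.node c l') z) :
    ∃ w, StepT A (.node c l) w ∧ CommT C w z := by
  cases hs with
  | root ha =>
    obtain ⟨p, q, rfl, hpq⟩ := hp.exists_replace_middle
    exact ⟨_, .root ha, .perm hcC (hpq _)⟩
  | congr hs =>
    obtain ⟨f, t, t', h, ht, rfl, rfl⟩ := hs.exists_append_cons
    obtain ⟨p, q, rfl, hpq⟩ := hp.exists_replace_middle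
    refine ⟨_, .congr (StepF.append_cons ht p q), .perm hcC ?_⟩
    simpa using hpq [t']

theorem exists_step_comm_of_commF_root {a : σ} {l f g h : List (RTree σ)} (ha : a ∈ A)
    (hc : CommF C l (f ++ .node a g :: h)) :
    ∃ w, StepT A (.node a l) w ∧ CommT C w (.node a (f ++ g ++ h)) := by
  rcases hc.cases_of_eq_append_cons with ⟨y, rfl, hy⟩ | ⟨f', rfl, hf⟩ | ⟨h', rfl, hh⟩
  · cases hy with
    | perm hcC hp => exact ⟨_, .root ha, .perm hcC ((hp.append_left f).append_right h)⟩
    | congr hg => exact ⟨_, .root ha, .congr (hg.append f h)⟩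
  · refine ⟨_, .root ha, .congr ?_⟩
    simpa only [List.nil_append, List.append_assoc] using hf.append [] (g ++ h)
  · refine ⟨_, .root ha, .congr ?_⟩
    simpa only [List.append_nil] using hh.append (f ++ g) []

end

/-- If `t₁` and `t₂` are related by a single commutativity application and
`t₂` rewrites in one associativity-collapsing step to `t₂'`, then `t₁`
rewrites in one step to some `t₁'` related to `t₂'` by a single commutativity
application. -/
theorem comm_step_commutation {σ : Type} (A C : Set σ) (t₁ t₂ t₂' : RTree σ)
    (hc : CommT C t₁ t₂) (hs : StepT A t₂ t₂') :
    ∃ t₁', StepT A t₁ t₁' ∧ CommT C t₁' t₂' := by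
  refine CommT.rec
    (motive_1 := fun t₁ t₂ _ => ∀ t₂', StepT A t₂ t₂' → ∃ t₁', StepT A t₁ t₁' ∧ CommT C t₁' t₂')
    (motive_2 := fun l₁ l₂ _ => ∀ l₂', StepF A l₂ l₂' → ∃ l₁', StepF A l₁ l₁' ∧ CommF C l₁' l₂')
    (fun hcC hp _ hs => exists_step_comm_of_perm hcC hp hs)
    (fun hcl ih _ hs => ?_) (fun hct ih _ hs => ?_) (fun hcl ih _ hs => ?_) hc t₂' hs
  · cases hs with
    | root ha => exact exists_step_comm_of_commF_root ha hcl
    | congr hs =>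
      obtain ⟨l₁', hs₁, hc₁⟩ := ih _ hs
      exact ⟨_, .congr hs₁, .congr hc₁⟩
  · cases hs with
    | head hs =>
      obtain ⟨t₁', hs₁, hc₁⟩ := ih _ hs
      exact ⟨_, .head hs₁, .head hc₁⟩
    | tail hs => exact ⟨_, .tail hs, .head hct⟩
  · cases hs with
    | head hs => exact ⟨_, .head hs, .tail hcl⟩
    | tail hs =>
      obtain ⟨l₁', hs₁, hc₁⟩ := ih _ hs
      exact ⟨_, .tail hs₁, .tail hc₁⟩
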